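/- Let E and F be homogeneous Moran sets with the same parameters ([0,1], {n_k}, {r_k}), let ν be the uniform Bernoulli measure of F, and let f : E → F satisfy |f(x)−f(y)| ≤ C|x−y| for all x, y ∈ E (C ≥ 1). Then for every k ≥ 0 and every σ ∈ Σ^k, ν(f(E_σ)) ≤ (C+2)/(n_1⋯n_k), i.e. ν(f(E_σ)) ≤ (C+2)·μ(E_σ) where μ is the uniform Bernoulli measure of E. -/

import Mathlib

open Set MeasureTheory
open scoped ENNReal

/-- `σ = (σ₁, …, σ_k)` is a valid word for the sequence `n`: its `i`-th entry
(1-based position `i+1` for 0-based index `i`) is smaller than `n (i+1)`. -/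
def IsWord (n : ℕ → ℕ) (σ : List ℕ) : Prop :=
  ∀ i : Fin σ.length, σ.get i < n (i + 1)

/-- A homogeneous Moran structure with parameters `([0,1], {n_k}, {r_k})`:
a family of closed intervals `J σ` indexed by words, with `J ∅ = [0,1]`,
nested, with pairwise disjoint interiors at each level, and
`|J (σ*i)| = r_{k} |J σ|` for `σ` of length `k-1`. -/
structure MoranStructure (n : ℕ → ℕ) (r : ℕ → ℝ) where
  J : List ℕ → Set ℝ
  J_empty : J [] = Set.Icc 0 1
  J_closedInterval : ∀ σ : List ℕ, IsWord n σ → ∃ a b : ℝ, a ≤ b ∧ J σ = Set.Icc a b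
  J_subset : ∀ σ : List ℕ, IsWord n σ → ∀ i < n (σ.length + 1), J (σ ++ [i]) ⊆ J σ
  J_disjointInterior : ∀ σ : List ℕ, IsWord n σ → ∀ i < n (σ.length + 1),
      ∀ j < n (σ.length + 1), i ≠ j →
      interior (J (σ ++ [i])) ∩ interior (J (σ ++ [j])) = ∅
  J_diam : ∀ σ : List ℕ, IsWord n σ → ∀ i < n (σ.length + 1),
      Metric.diam (J (σ ++ [i])) = r (σ.length + 1) * Metric.diam (J σ)

variable {n : ℕ → ℕ} {r : ℕ → ℝ}

/-- The `k`-th approximation `E_k`: the union of all basic intervals of rank `k`. -/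
def MoranStructure.approx (M : MoranStructure n r) (k : ℕ) : Set ℝ :=
  ⋃ σ ∈ {σ : List ℕ | σ.length = k ∧ IsWord n σ}, M.J σ

/-- The homogeneous Moran set `E = ⋂_k E_k`. -/
def MoranStructure.moranSet (M : MoranStructure n r) : Set ℝ :=
  ⋂ k, M.approx k

/-- The total gap of rank `k`: `Δ_k = r_1 ⋯ r_{k-1} (1 - n_k r_k)`. -/
noncomputable def totalGap (n : ℕ → ℕ) (r : ℕ → ℝ) (k : ℕ) : ℝ :=
  (∏ j ∈ Finset.Icc 1 (k - 1), r j) * (1 - (n k : ℝ) * r k)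

/-- Distance between two subsets of `ℝ`: `dist(A,B) = inf {|x-y| : x ∈ A, y ∈ B}`. -/
noncomputable def setDist (A B : Set ℝ) : ℝ :=
  sInf {d : ℝ | ∃ x ∈ A, ∃ y ∈ B, d = |x - y|}

/-- The weak separation condition with constant `η₀`. -/
def MoranStructure.WSC (M : MoranStructure n r) (η₀ : ℝ) : Prop :=
  ∀ σ : List ℕ, IsWord n σ → ∀ i < n (σ.length + 1), ∀ j < n (σ.length + 1), i ≠ j →
    (M.J (σ ++ [i]) ∩ M.J (σ ++ [j])).Nonempty ∨
      setDist (M.J (σ ++ [i])) (M.J (σ ++ [j])) >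
        η₀ * (Metric.diam (M.J σ) -
          ∑ m ∈ Finset.range (n (σ.length + 1)), Metric.diam (M.J (σ ++ [m])))

/-- `μ` is the uniform Bernoulli measure of the Moran structure `M`:
a Borel probability measure concentrated on the Moran set, giving each
cylinder of rank `k` measure `1/(n_1 ⋯ n_k)`. -/
def IsUniformBernoulli (M : MoranStructure n r) (μ : Measure ℝ) : Prop :=
  IsProbabilityMeasure μ ∧ μ M.moranSetᶜ = 0 ∧
    ∀ σ : List ℕ, IsWord n σ →
      μ (M.J σ ∩ M.moranSet) = 1 / ∏ j ∈ Finset.Icc 1 σ.length, (n j : ℝ≥0∞)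

/-- `I` is a connected component of the set `S ⊆ ℝ`. -/
def IsCC (S I : Set ℝ) : Prop := ∃ x ∈ S, I = connectedComponentIn S x

/-- `X` is `δ`-connected: any two points of `X` are joined by a finite chain
of points of `X` with consecutive distances at most `δ`. -/
def DeltaConnected (δ : ℝ) (X : Set ℝ) : Prop :=
  ∀ x ∈ X, ∀ y ∈ X, ∃ (m : ℕ) (z : Fin (m + 1) → ℝ),
    (∀ i, z i ∈ X) ∧ z 0 = x ∧ z (Fin.last m) = y ∧
      ∀ i : Fin m, |z i.castSucc - z i.succ| ≤ δ

/-!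
The image `f(E_σ)` has diameter at most `C·|J_σ|`, so every rank-`k` basic interval of `F` that
meets it lies in an interval of length `(C + 2)·|J_σ|`. Rank-`k` basic intervals all have length
`|J_σ|` and disjoint interiors, so by comparing Lebesgue measures at most `C + 2` of them meet
`f(E_σ)`; these cover `f(E_σ) ⊆ F`, and each carries `ν`-mass `1/(n_1 ⋯ n_k)`.
-/

section Counting

open Bornology Metric

theorem card_mul_le_diam_add_of_pairwiseDisjoint_interior {ι : Type*} {T : Finset ι}
    {I : ι → Set ℝ} {S : Set ℝ} {d : ℝ} (hS : IsBounded S) (hd : 0 ≤ d)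
    (hIcc : ∀ i ∈ T, ∃ a b, a ≤ b ∧ I i = Icc a b) (hdiam : ∀ i ∈ T, diam (I i) = d)
    (hmeet : ∀ i ∈ T, (I i ∩ S).Nonempty) (hdisj : (T : Set ι).PairwiseDisjoint (interior ∘ I)) :
    T.card * d ≤ diam S + 2 * d := by
  have hsub : ∀ i ∈ T, I i ⊆ Icc (sInf S - d) (sSup S + d) := by
    intro i hi
    obtain ⟨a, b, hab, hI⟩ := hIcc i hi
    obtain ⟨x, hxI, hxS⟩ := hmeet i hi
    have hba : b - a = d := by rw [← hdiam i hi, hI, Real.diam_Icc hab]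
    rw [hI] at hxI ⊢
    have hx := hS.subset_Icc_sInf_sSup hxS
    exact Icc_subset_Icc (by linarith [hxI.2, hx.1]) (by linarith [hxI.1, hx.2])
  have hvol : ∀ i ∈ T, volume (interior (I i)) = ENNReal.ofReal d := by
    intro i hi
    obtain ⟨a, b, hab, hI⟩ := hIcc i hi
    rw [← hdiam i hi, hI, interior_Icc, Real.volume_Ioo, Real.diam_Icc hab]
  rw [← ENNReal.ofReal_le_ofReal_iff (by positivity)]
  calc ENNReal.ofReal (T.card * d) = ∑ i ∈ T, volume (interior (I i)) := by
        rw [Finset.sum_congr rfl hvol, Finset.sum_const, nsmul_eq_mul,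
          ENNReal.ofReal_mul (Nat.cast_nonneg _), ENNReal.ofReal_natCast]
    _ = volume (⋃ i ∈ T, interior (I i)) :=
        (measure_biUnion_finset hdisj fun i _ => isOpen_interior.measurableSet).symm
    _ ≤ volume (Icc (sInf S - d) (sSup S + d)) :=
        measure_mono (iUnion₂_subset fun i hi => interior_subset.trans (hsub i hi))
    _ = ENNReal.ofReal (diam S + 2 * d) := by
        rw [Real.volume_Icc, Real.diam_eq hS]
        ring_nf

end Counting

theorem isWord_append_singleton_iff {σ : List ℕ} {i : ℕ} :
    IsWord n (σ ++ [i]) ↔ IsWord n σ ∧ i < n (σ.length + 1) := by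
  constructor
  · intro h
    refine ⟨fun j => ?_, ?_⟩
    · simpa [List.getElem_append_left j.2] using h ⟨j, by simp⟩
    · simpa using h ⟨σ.length, by simp⟩
  · rintro ⟨hσ, hi⟩ ⟨j, hj⟩
    rw [List.length_append, List.length_singleton] at hj
    rcases Nat.lt_succ_iff_lt_or_eq.mp hj with hj | rfl
    · simpa [List.getElem_append_left hj] using hσ ⟨j, hj⟩
    · simpa using hi

def words (n : ℕ → ℕ) : ℕ → Finset (List ℕ)
  | 0 => {[]}
  | k + 1 => (words n k ×ˢ Finset.range (n (k + 1))).image fun p => p.1 ++ [p.2]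

theorem mem_words {k : ℕ} {σ : List ℕ} : σ ∈ words n k ↔ σ.length = k ∧ IsWord n σ := by
  induction k generalizing σ with
  | zero =>
    simp only [words, Finset.mem_singleton, List.length_eq_zero_iff, iff_self_and]
    rintro rfl ⟨i, hi⟩
    simp at hi
  | succ k ih =>
    simp only [words, Finset.mem_image, Finset.mem_product, Finset.mem_range, ih]
    constructor
    · rintro ⟨⟨τ, i⟩, ⟨⟨rfl, hτ⟩, hi⟩, rfl⟩
      exact ⟨by simp, isWord_append_singleton_iff.mpr ⟨hτ, hi⟩⟩
    · rintro ⟨hlen, hσ⟩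
      obtain rfl | ⟨τ, i, rfl⟩ := σ.eq_nil_or_concat'
      · simp at hlen
      obtain ⟨hτ, hi⟩ := isWord_append_singleton_iff.mp hσ
      simp only [List.length_append, List.length_singleton, Nat.add_right_cancel_iff] at hlen
      exact ⟨(τ, i), ⟨⟨hlen, hτ⟩, hlen ▸ hi⟩, rfl⟩

namespace MoranStructure

variable (M : MoranStructure n r)

theorem diam_J {σ : List ℕ} (hσ : IsWord n σ) :
    Metric.diam (M.J σ) = ∏ j ∈ Finset.Icc 1 σ.length, r j := by
  induction σ using List.reverseRecOn with
  | nil => simp [M.J_empty, Real.diam_Icc zero_le_one]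
  | append_singleton τ i ih =>
    obtain ⟨hτ, hi⟩ := isWord_append_singleton_iff.mp hσ
    rw [M.J_diam τ hτ i hi, ih hτ, List.length_append, List.length_singleton,
      Finset.prod_Icc_succ_top (Nat.le_add_left 1 _), mul_comm]

theorem disjoint_interior_J {σ τ : List ℕ} (hσ : IsWord n σ) (hτ : IsWord n τ)
    (hlen : σ.length = τ.length) (hne : σ ≠ τ) :
    Disjoint (interior (M.J σ)) (interior (M.J τ)) := by
  induction σ using List.reverseRecOn generalizing τ with
  | nil => exact absurd (List.length_eq_zero_iff.mp hlen.symm).symm hne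
  | append_singleton σ i ih =>
    obtain rfl | ⟨τ, j, rfl⟩ := τ.eq_nil_or_concat'
    · simp at hlen
    obtain ⟨hσ, hi⟩ := isWord_append_singleton_iff.mp hσ
    obtain ⟨hτ, hj⟩ := isWord_append_singleton_iff.mp hτ
    simp only [List.length_append, List.length_singleton, Nat.add_right_cancel_iff] at hlen
    by_cases hστ : σ = τ
    · subst hστ
      have hij : i ≠ j := fun h => hne (h ▸ rfl)
      exact Set.disjoint_iff_inter_eq_empty.mpr (M.J_disjointInterior σ hσ i hi j hj hij)
    · exact (ih hσ hτ hlen hστ).mono (interior_mono (M.J_subset σ hσ i hi))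
        (interior_mono (M.J_subset τ hτ j (hlen ▸ hj)))

theorem dist_le_of_mem_J {σ : List ℕ} (hσ : IsWord n σ) {x y : ℝ} (hx : x ∈ M.J σ)
    (hy : y ∈ M.J σ) : dist x y ≤ ∏ j ∈ Finset.Icc 1 σ.length, r j := by
  obtain ⟨a, b, -, hJ⟩ := M.J_closedInterval σ hσ
  rw [← M.diam_J hσ]
  exact Metric.dist_le_diam_of_mem (hJ ▸ Metric.isBounded_Icc a b) hx hy

theorem exists_mem_words_of_mem_moranSet {x : ℝ} (hx : x ∈ M.moranSet) (k : ℕ) :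
    ∃ τ ∈ words n k, x ∈ M.J τ := by
  have hxk := mem_iInter.mp hx k
  simp only [approx, mem_iUnion, exists_prop] at hxk
  obtain ⟨τ, hτ, hxτ⟩ := hxk
  exact ⟨τ, mem_words.mpr hτ, hxτ⟩

open Classical in
theorem card_mul_prod_le_diam_add {S : Set ℝ} (hS : Bornology.IsBounded S) (k : ℕ)
    (hd : 0 ≤ ∏ j ∈ Finset.Icc 1 k, r j) :
    ((words n k).filter fun τ => (M.J τ ∩ S).Nonempty).card * ∏ j ∈ Finset.Icc 1 k, r j ≤
      Metric.diam S + 2 * ∏ j ∈ Finset.Icc 1 k, r j := by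
  have hword : ∀ τ ∈ (words n k).filter fun τ => (M.J τ ∩ S).Nonempty,
      τ.length = k ∧ IsWord n τ := fun τ hτ => mem_words.mp (Finset.mem_filter.mp hτ).1
  refine card_mul_le_diam_add_of_pairwiseDisjoint_interior hS hd
    (fun τ hτ => M.J_closedInterval τ (hword τ hτ).2)
    (fun τ hτ => (hword τ hτ).1 ▸ M.diam_J (hword τ hτ).2)
    (fun τ hτ => (Finset.mem_filter.mp hτ).2) ?_
  intro τ hτ υ hυ hne
  exact M.disjoint_interior_J (hword τ hτ).2 (hword υ hυ).2
    ((hword τ hτ).1.trans (hword υ hυ).1.symm) hne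

end MoranStructure

open Classical in
theorem IsUniformBernoulli.measure_le_card_div {M : MoranStructure n r} {ν : Measure ℝ}
    (hν : IsUniformBernoulli M ν) {A : Set ℝ} (hA : A ⊆ M.moranSet) (k : ℕ) :
    ν A ≤ ((words n k).filter fun τ => (M.J τ ∩ A).Nonempty).card /
      ∏ j ∈ Finset.Icc 1 k, (n j : ℝ≥0∞) := by
  set T := (words n k).filter fun τ => (M.J τ ∩ A).Nonempty
  have hcover : A ⊆ ⋃ τ ∈ T, M.J τ ∩ M.moranSet := by
    intro x hx
    obtain ⟨τ, hτ, hxτ⟩ := M.exists_mem_words_of_mem_moranSet (hA hx) k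
    exact mem_iUnion₂.mpr ⟨τ, Finset.mem_filter.mpr ⟨hτ, x, hxτ, hx⟩, hxτ, hA hx⟩
  have hcyl : ∀ τ ∈ T, ν (M.J τ ∩ M.moranSet) = 1 / ∏ j ∈ Finset.Icc 1 k, (n j : ℝ≥0∞) := by
    intro τ hτ
    obtain ⟨hlen, hτ⟩ := mem_words.mp (Finset.mem_filter.mp hτ).1
    rw [hν.2.2 τ hτ, hlen]
  calc ν A ≤ ∑ τ ∈ T, ν (M.J τ ∩ M.moranSet) :=
        (measure_mono hcover).trans (measure_biUnion_finset_le T _)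
    _ = T.card / ∏ j ∈ Finset.Icc 1 k, (n j : ℝ≥0∞) := by
        rw [Finset.sum_congr rfl hcyl, Finset.sum_const, nsmul_eq_mul, mul_one_div]

theorem moran_cylinder_image_bound_general
    (n : ℕ → ℕ) (r : ℕ → ℝ)
    (hr : ∀ k ≥ 1, 0 < r k ∧ (n k : ℝ) * r k ≤ 1)
    (ME MF : MoranStructure n r)
    (μ ν : Measure ℝ)
    (hμ : IsUniformBernoulli ME μ) (hν : IsUniformBernoulli MF ν)
    (C : ℝ) (hC : 1 ≤ C) (f : ℝ → ℝ)
    (hfLip : ∀ x ∈ ME.moranSet, ∀ y ∈ ME.moranSet, |f x - f y| ≤ C * |x - y|)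
    (hfim : f '' ME.moranSet ⊆ MF.moranSet) :
    ∀ σ : List ℕ, IsWord n σ →
      ν (f '' (ME.J σ ∩ ME.moranSet)) ≤
          ENNReal.ofReal (C + 2) / ∏ j ∈ Finset.Icc 1 σ.length, (n j : ℝ≥0∞) ∧
      ν (f '' (ME.J σ ∩ ME.moranSet)) ≤
          ENNReal.ofReal (C + 2) * μ (ME.J σ ∩ ME.moranSet) := by
  classical
  intro σ hσ
  set d := ∏ j ∈ Finset.Icc 1 σ.length, r j
  set S := f '' (ME.J σ ∩ ME.moranSet)
  set T := (words n σ.length).filter fun τ => (MF.J τ ∩ S).Nonempty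
  have hd : 0 < d := Finset.prod_pos fun j hj => (hr j (Finset.mem_Icc.mp hj).1).1
  have hdist : ∀ x ∈ S, ∀ y ∈ S, dist x y ≤ C * d := by
    rintro _ ⟨x, hx, rfl⟩ _ ⟨y, hy, rfl⟩
    calc dist (f x) (f y) ≤ C * dist x y := hfLip x hx.2 y hy.2
      _ ≤ C * d := by gcongr; exact ME.dist_le_of_mem_J hσ hx.1 hy.1
  have hcount := MF.card_mul_prod_le_diam_add (Metric.isBounded_iff.mpr ⟨_, hdist⟩) σ.length hd.le
  have hcard : (T.card : ℝ) ≤ C + 2 := by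
    refine le_of_mul_le_mul_right ?_ hd
    linarith [hcount, Metric.diam_le_of_forall_dist_le (by positivity) hdist]
  have hνS : ν S ≤ ENNReal.ofReal (C + 2) / ∏ j ∈ Finset.Icc 1 σ.length, (n j : ℝ≥0∞) := by
    refine (hν.measure_le_card_div ((image_mono inter_subset_right).trans hfim) σ.length).trans ?_
    gcongr
    exact (ENNReal.ofReal_natCast _).symm.trans_le (ENNReal.ofReal_le_ofReal hcard)
  exact ⟨hνS, by rwa [hμ.2.2 σ hσ, mul_one_div]⟩

/-- **Claim (cylinder image bound).**
If `f : E → F` is Lipschitz with constant `C ≥ 1` between homogeneous Moran sets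
with the same parameters and `ν` is the uniform Bernoulli measure of `F`, then for
every word `σ` of length `k`, `ν(f(E_σ)) ≤ (C+2)/(n_1 ⋯ n_k) = (C+2) μ(E_σ)`. -/
theorem moran_cylinder_image_bound
    (n : ℕ → ℕ) (r : ℕ → ℝ)
    (hn : ∀ k ≥ 1, 2 ≤ n k)
    (hr : ∀ k ≥ 1, 0 < r k ∧ (n k : ℝ) * r k ≤ 1)
    (ME MF : MoranStructure n r)
    (μ ν : Measure ℝ)
    (hμ : IsUniformBernoulli ME μ) (hν : IsUniformBernoulli MF ν)
    (C : ℝ) (hC : 1 ≤ C) (f : ℝ → ℝ)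
    (hfLip : ∀ x ∈ ME.moranSet, ∀ y ∈ ME.moranSet, |f x - f y| ≤ C * |x - y|)
    (hfim : f '' ME.moranSet ⊆ MF.moranSet) :
    ∀ σ : List ℕ, IsWord n σ →
      ν (f '' (ME.J σ ∩ ME.moranSet)) ≤
          ENNReal.ofReal (C + 2) / ∏ j ∈ Finset.Icc 1 σ.length, (n j : ℝ≥0∞) ∧
      ν (f '' (ME.J σ ∩ ME.moranSet)) ≤
          ENNReal.ofReal (C + 2) * μ (ME.J σ ∩ ME.moranSet) :=
  moran_cylinder_image_bound_general n r hr ME MF μ ν hμ hν C hC f hfLip hfim
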